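/- If λ ≥ σ₁ (the largest singular value of X), then the global minimizer of J(U,V) = ‖X − UVᵀ‖²_F + λ‖U‖²_F + λ‖V‖²_F has UVᵀ = 0 achievable by V = 0, and the optimal value is ‖X‖²_F. -/
import Mathlib


open Matrix BigOperators

noncomputable def frobSq {n m : ℕ} (A : Matrix (Fin n) (Fin m) ℝ) : ℝ :=
  ∑ i, ∑ j, (A i j)^2

private lemma frobSq_nonneg {n m : ℕ} (A : Matrix (Fin n) (Fin m) ℝ) : 0 ≤ frobSq A := by
  unfold frobSq
  positivity

private lemma frobSq_eq_trace {n m : ℕ} (A : Matrix (Fin n) (Fin m) ℝ) :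
    frobSq A = Matrix.trace (Aᵀ * A) := by
  unfold frobSq Matrix.trace
  rw [Finset.sum_comm]
  simp [Matrix.mul_apply, Matrix.diag, pow_two]

private lemma ip_eq_trace {n m : ℕ} (A B : Matrix (Fin n) (Fin m) ℝ) :
    (∑ i, ∑ j, A i j * B i j) = Matrix.trace (Aᵀ * B) := by
  unfold Matrix.trace
  rw [Finset.sum_comm]
  simp [Matrix.mul_apply, Matrix.diag]

private lemma proj_le {n r k : ℕ} (F : Matrix (Fin n) (Fin r) ℝ)
    (hF : Fᵀ * F = 1) (U : Matrix (Fin n) (Fin k) ℝ) :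
    frobSq (Fᵀ * U) ≤ frobSq U := by
  have hP : frobSq ((1 - F * Fᵀ) * U) =
      Matrix.trace (Uᵀ * U) - Matrix.trace ((Fᵀ * U)ᵀ * (Fᵀ * U)) := by
    rw [frobSq_eq_trace]
    have key : ((1 - F * Fᵀ) * U)ᵀ * ((1 - F * Fᵀ) * U)
        = Uᵀ * U - (Fᵀ * U)ᵀ * (Fᵀ * U) := by
      have h2 : F * Fᵀ * (F * Fᵀ) = F * Fᵀ := by
        calc F * Fᵀ * (F * Fᵀ) = F * (Fᵀ * F) * Fᵀ := by
              simp [Matrix.mul_assoc]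
          _ = F * Fᵀ := by rw [hF]; simp
      have ht : ((1 - F * Fᵀ) * U)ᵀ = Uᵀ * (1 - F * Fᵀ) := by
        rw [Matrix.transpose_mul, Matrix.transpose_sub, Matrix.transpose_one,
          Matrix.transpose_mul, Matrix.transpose_transpose]
      rw [ht]
      have hmid : (1 - F * Fᵀ) * ((1 - F * Fᵀ) * U) = U - F * Fᵀ * U := by
        rw [Matrix.sub_mul, Matrix.one_mul, Matrix.sub_mul, Matrix.one_mul,
          Matrix.mul_sub, ← Matrix.mul_assoc, h2]
        abel
      rw [Matrix.mul_assoc, hmid, Matrix.mul_sub]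
      congr 1
      rw [Matrix.transpose_mul, Matrix.transpose_transpose, Matrix.mul_assoc,
        Matrix.mul_assoc]
    rw [key, Matrix.trace_sub]
  have h0 := frobSq_nonneg ((1 - F * Fᵀ) * U)
  rw [hP] at h0
  rw [frobSq_eq_trace, frobSq_eq_trace]
  linarith

/-- If λ ≥ σ₁ (largest singular value of X) then J(U,V) ≥ ‖X‖²_F for all U, V,
    the value ‖X‖²_F is achieved at U = 0, V = 0 (so UVᵀ = 0). -/
theorem rsvd_trivial_solution_large_lambda {n m r k : ℕ}
    (X : Matrix (Fin n) (Fin m) ℝ)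
    (F : Matrix (Fin n) (Fin r) ℝ) (G : Matrix (Fin m) (Fin r) ℝ)
    (σ : Fin r → ℝ) (hσpos : ∀ i, 0 < σ i) (hσmono : Antitone σ)
    (hF : Fᵀ * F = 1) (hG : Gᵀ * G = 1)
    (hX : X = F * Matrix.diagonal σ * Gᵀ)
    (lam : ℝ) (hlam : 0 < lam) (hlam1 : ∀ i, σ i ≤ lam) :
    (∀ (U : Matrix (Fin n) (Fin k) ℝ) (V : Matrix (Fin m) (Fin k) ℝ),
        frobSq X ≤ frobSq (X - U * Vᵀ) + lam * frobSq U + lam * frobSq V) ∧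
    frobSq (X - (0 : Matrix (Fin n) (Fin k) ℝ) * (0 : Matrix (Fin m) (Fin k) ℝ)ᵀ)
      + lam * frobSq (0 : Matrix (Fin n) (Fin k) ℝ)
      + lam * frobSq (0 : Matrix (Fin m) (Fin k) ℝ) = frobSq X := by
  constructor
  · intro U V
    set M : Matrix (Fin n) (Fin m) ℝ := U * Vᵀ with hM
    have hexp : frobSq (X - M) =
        frobSq X - 2 * (∑ i, ∑ j, X i j * M i j) + frobSq M := by
      unfold frobSq
      simp only [Finset.mul_sum]
      rw [← Finset.sum_sub_distrib, ← Finset.sum_add_distrib]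
      apply Finset.sum_congr rfl; intro i _
      rw [← Finset.sum_sub_distrib, ← Finset.sum_add_distrib]
      apply Finset.sum_congr rfl; intro j _
      simp [Matrix.sub_apply]; ring
    set A : Matrix (Fin r) (Fin k) ℝ := Fᵀ * U with hA
    set B : Matrix (Fin r) (Fin k) ℝ := Gᵀ * V with hB
    have hip : (∑ i, ∑ j, X i j * M i j) = ∑ i, σ i * (∑ j, A i j * B i j) := by
      rw [ip_eq_trace]
      have h1 : Xᵀ * M = G * (Matrix.diagonal σ * A * Vᵀ) := by
        rw [hX, hM, hA]
        simp [Matrix.transpose_mul, Matrix.diagonal_transpose, Matrix.mul_assoc]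
      rw [h1, Matrix.trace_mul_comm]
      have h2 : (Matrix.diagonal σ * A * Vᵀ) * G = Matrix.diagonal σ * (A * Bᵀ) := by
        rw [hB, Matrix.transpose_mul, Matrix.transpose_transpose, Matrix.mul_assoc,
          Matrix.mul_assoc]
      rw [h2]
      unfold Matrix.trace
      apply Finset.sum_congr rfl; intro i _
      simp only [Matrix.diag, Matrix.diagonal_mul]
      rw [Matrix.mul_apply, Finset.mul_sum, Finset.mul_sum]
      apply Finset.sum_congr rfl; intro j _
      simp
    have hbound : 2 * (∑ i, ∑ j, X i j * M i j) ≤ lam * (frobSq A + frobSq B) := by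
      rw [hip]
      unfold frobSq
      calc 2 * ∑ i, σ i * ∑ j, A i j * B i j
          = ∑ i, ∑ j, 2 * (σ i * (A i j * B i j)) := by
            rw [Finset.mul_sum]
            apply Finset.sum_congr rfl; intro i _
            rw [Finset.mul_sum, Finset.mul_sum]
        _ ≤ ∑ i, ∑ j, (lam * (A i j)^2 + lam * (B i j)^2) := by
            apply Finset.sum_le_sum; intro i _
            apply Finset.sum_le_sum; intro j _
            have h3 := hσpos i
            have h4 := hlam1 i
            nlinarith [sq_nonneg (A i j - B i j), sq_nonneg (A i j), sq_nonneg (B i j)]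
        _ = lam * ((∑ i, ∑ j, (A i j)^2) + (∑ i, ∑ j, (B i j)^2)) := by
            rw [mul_add, Finset.mul_sum, Finset.mul_sum, ← Finset.sum_add_distrib]
            apply Finset.sum_congr rfl; intro i _
            rw [Finset.mul_sum, Finset.mul_sum, ← Finset.sum_add_distrib]
    have hU := proj_le F hF U
    have hV := proj_le G hG V
    have hMnn := frobSq_nonneg M
    rw [hexp]
    nlinarith [hlam.le]
  · simp [frobSq]
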